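/- Let R : [0, ∞) → ℝ be a differentiable function satisfying R'(t) ≥ (2/3)·R(t)² for all t ≥ 0 and R(0) ≥ -6. Then for all t ≥ 0, R(t) ≥ -3/(2(t + 1/4)). -/

import Mathlib

/-!
Since `R' ≥ (2/3) R² ≥ 0`, `R` is nondecreasing, so if `R t < 0` then `R < 0` on `[0, t]`.
There `(1/R)' = -R'/R² ≤ -2/3`, whence `1/R t ≤ 1/R 0 - 2t/3 ≤ -1/6 - 2t/3 = -(2/3)(t + 1/4)`,
and inverting this negative bound gives the claim.
-/

open Set

lemma monotoneOn_of_hasDerivAt_nonneg {D : Set ℝ} (hD : Convex ℝ D) {f f' : ℝ → ℝ}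
    (hf : ∀ x ∈ D, HasDerivAt f (f' x) x) (hf' : ∀ x ∈ D, 0 ≤ f' x) : MonotoneOn f D :=
  monotoneOn_of_hasDerivWithinAt_nonneg hD
    (fun x hx => (hf x hx).continuousAt.continuousWithinAt)
    (fun x hx => (hf x (interior_subset hx)).hasDerivWithinAt)
    (fun x hx => hf' x (interior_subset hx))

lemma antitoneOn_of_hasDerivAt_nonpos {D : Set ℝ} (hD : Convex ℝ D) {f f' : ℝ → ℝ}
    (hf : ∀ x ∈ D, HasDerivAt f (f' x) x) (hf' : ∀ x ∈ D, f' x ≤ 0) : AntitoneOn f D :=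
  antitoneOn_of_hasDerivWithinAt_nonpos hD
    (fun x hx => (hf x hx).continuousAt.continuousWithinAt)
    (fun x hx => (hf x (interior_subset hx)).hasDerivWithinAt)
    (fun x hx => hf' x (interior_subset hx))

lemma inv_le_inv_sub_mul_of_mul_sq_le_deriv {f f' : ℝ → ℝ} {a b c : ℝ} (hab : a ≤ b)
    (hf : ∀ x ∈ Icc a b, HasDerivAt f (f' x) x) (hineq : ∀ x ∈ Icc a b, c * f x ^ 2 ≤ f' x)
    (hne : ∀ x ∈ Icc a b, f x ≠ 0) :
    (f b)⁻¹ ≤ (f a)⁻¹ - c * (b - a) := by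
  have hg : ∀ x ∈ Icc a b,
      HasDerivAt (fun y => (f y)⁻¹ + c * y) (-f' x / f x ^ 2 + c * 1) x := fun x hx =>
    ((hf x hx).inv (hne x hx)).add ((hasDerivAt_id x).const_mul c)
  have hg' : ∀ x ∈ Icc a b, -f' x / f x ^ 2 + c * 1 ≤ 0 := by
    intro x hx
    have hsq : 0 < f x ^ 2 := by positivity [hne x hx]
    rw [neg_div, mul_one, neg_add_nonpos_iff, le_div_iff₀ hsq]
    exact hineq x hx
  have := antitoneOn_of_hasDerivAt_nonpos (convex_Icc a b) hg hg'
    (left_mem_Icc.2 hab) (right_mem_Icc.2 hab) hab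
  linarith

/-- ODE comparison giving the lower bound `R(t) ≥ -3/(2(t+1/4))`. -/
theorem rmin_lower_bound (R R' : ℝ → ℝ)
    (hderiv : ∀ t : ℝ, 0 ≤ t → HasDerivAt R (R' t) t)
    (hineq : ∀ t : ℝ, 0 ≤ t → (2/3) * (R t)^2 ≤ R' t)
    (h0 : -6 ≤ R 0) :
    ∀ t : ℝ, 0 ≤ t → -3 / (2 * (t + 1/4)) ≤ R t := by
  intro t ht
  have hbarrier : -3 / (2 * (t + 1/4)) = (-(2/3 * (t + 1/4)))⁻¹ := by
    field_simp
  rcases le_or_gt 0 (R t) with hRt | hRt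
  · exact le_trans (div_nonpos_of_nonpos_of_nonneg (by norm_num) (by positivity)) hRt
  have hmono : MonotoneOn R (Ici 0) := monotoneOn_of_hasDerivAt_nonneg (convex_Ici 0) hderiv
    fun x hx => le_trans (by positivity) (hineq x hx)
  have hneg : ∀ x ∈ Icc 0 t, R x < 0 := fun x hx =>
    (hmono hx.1 (mem_Ici.2 ht) hx.2).trans_lt hRt
  have hcomp : (R t)⁻¹ ≤ (R 0)⁻¹ - 2/3 * (t - 0) :=
    inv_le_inv_sub_mul_of_mul_sq_le_deriv ht (fun x hx => hderiv x hx.1)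
      (fun x hx => hineq x hx.1) (fun x hx => (hneg x hx).ne)
  have hR0 : (R 0)⁻¹ ≤ (-6)⁻¹ :=
    (inv_le_inv_of_neg (hneg 0 ⟨le_rfl, ht⟩) (by norm_num)).2 h0
  rw [hbarrier, ← inv_le_of_neg hRt (by linarith)]
  linarith
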